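/- arXiv:2601.13998 — 2 statements merged into one kernel-verified Lean document; each statement's English description precedes it below -/
import Mathlib

section
/- If β₁₀β₂₁ − β₁₁β₂₀ = 0 and β₂₁ > 0, then for all x > −β₂₀/β₂₁ the angular mean direction atan2(β₂₀ + β₂₁x, β₁₀ + β₁₁x) equals atan2(β₂₁, β₁₁), and for all x < −β₂₀/β₂₁ it equals the antipodal angle atan2(β₂₁, β₁₁) + π (mod 2π). -/
open Complex

/-- If `β₁₀β₂₁ − β₁₁β₂₀ = 0` and `β₂₁ > 0`, then for `x > −β₂₀/β₂₁` the angular mean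
direction `atan2(β₂₀ + β₂₁x, β₁₀ + β₁₁x)` equals `atan2(β₂₁, β₁₁)`, and for
`x < −β₂₀/β₂₁` it equals the antipodal angle `atan2(β₂₁, β₁₁) + π` modulo `2π`. -/
theorem angular_mean_direction_parallel_case (β₁₀ β₁₁ β₂₀ β₂₁ : ℝ)
    (hne : (β₁₁, β₂₁) ≠ (0, 0)) (hdet : β₁₀ * β₂₁ - β₁₁ * β₂₀ = 0) (hβ : 0 < β₂₁) :
    (∀ x : ℝ, -β₂₀ / β₂₁ < x →
      Complex.arg (⟨β₁₀ + β₁₁ * x, β₂₀ + β₂₁ * x⟩ : ℂ) =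
        Complex.arg (⟨β₁₁, β₂₁⟩ : ℂ)) ∧
    (∀ x : ℝ, x < -β₂₀ / β₂₁ →
      ((Complex.arg (⟨β₁₀ + β₁₁ * x, β₂₀ + β₂₁ * x⟩ : ℂ) : Real.Angle) =
        ((Complex.arg (⟨β₁₁, β₂₁⟩ : ℂ) + Real.pi : ℝ) : Real.Angle))) := by
  have hβ' : β₂₁ ≠ 0 := ne_of_gt hβ
  have key : ∀ x : ℝ, (⟨β₁₀ + β₁₁ * x, β₂₀ + β₂₁ * x⟩ : ℂ) =
      ((x + β₂₀ / β₂₁ : ℝ) : ℂ) * (⟨β₁₁, β₂₁⟩ : ℂ) := by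
    intro x
    apply Complex.ext
    · simp [Complex.mul_re]
      field_simp
      nlinarith [hdet]
    · simp [Complex.mul_im]
      field_simp
      ring
  have hz : (⟨β₁₁, β₂₁⟩ : ℂ) ≠ 0 := by
    intro h
    have : β₂₁ = 0 := congrArg Complex.im h
    exact hβ' this
  constructor
  · intro x hx
    rw [key x]
    have ht : 0 < x + β₂₀ / β₂₁ := by rw [neg_div] at hx; linarith
    exact Complex.arg_real_mul _ ht
  · intro x hx
    have ht : x + β₂₀ / β₂₁ < 0 := by
      have : x < -(β₂₀ / β₂₁) := by rwa [neg_div] at hx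
      linarith
    rw [key x]
    have : ((x + β₂₀ / β₂₁ : ℝ) : ℂ) * (⟨β₁₁, β₂₁⟩ : ℂ) =
        -(((-(x + β₂₀ / β₂₁) : ℝ) : ℂ) * (⟨β₁₁, β₂₁⟩ : ℂ)) := by push_cast; ring
    rw [this, Complex.arg_neg_coe_angle (by
      intro h
      exact hz (by
        have hrne : ((-(x + β₂₀ / β₂₁) : ℝ) : ℂ) ≠ 0 := by
          exact_mod_cast Complex.ofReal_ne_zero.mpr (ne_of_gt (neg_pos.mpr ht))
        exact (mul_eq_zero.mp h).resolve_left hrne)),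
      Complex.arg_real_mul _ (neg_pos.mpr ht)]
    push_cast
    rfl
end

section
/- Let θ ∼ PN₂(B, G) with B = Xᵀβ (depending on covariates with at least two distinct covariate values in general position) and G = I₂ + S_b where S_b is a positive semidefinite 2×2 matrix. If the generalized variance constraint |S_b| = 1 is imposed, then the map (β, S_b) ↦ distribution of θ is injective up to the scaling non-identifiability: no two distinct pairs (B, G) and (cB, c²G) with c ≠ 1 can both satisfy |G − I₂| = 1. -/
/-!
With `t = c²`, the `2 × 2` determinant of `t • (1 + S) - 1 = t • S + (t - 1) • 1` is
`t² det S + t (t - 1) tr S + (t - 1)²`; given `det S = 1` the second constraint becomes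
`t (t - 1) (2 + tr S) = 0`, and `tr S ≥ 0` for positive semidefinite `S` forces `t = 1`.
-/

namespace Matrix

variable {R : Type*} [CommRing R]

theorem det_add_smul_one_fin_two (A : Matrix (Fin 2) (Fin 2) R) (s : R) :
    (A + s • 1).det = A.det + s * A.trace + s ^ 2 := by
  simp only [det_fin_two, trace_fin_two, add_apply, smul_apply, smul_eq_mul, one_apply_eq,
    one_apply_ne zero_ne_one, one_apply_ne one_ne_zero]
  ring

theorem det_smul_one_add_sub_one_fin_two (S : Matrix (Fin 2) (Fin 2) R) (t : R) :
    (t • (1 + S) - 1).det = t ^ 2 * S.det + t * (t - 1) * S.trace + (t - 1) ^ 2 := by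
  have hsplit : t • (1 + S) - 1 = t • S + (t - 1) • (1 : Matrix (Fin 2) (Fin 2) R) := by
    rw [smul_add, sub_smul, one_smul]
    abel
  rw [hsplit, det_add_smul_one_fin_two, det_smul, trace_smul, Fintype.card_fin, smul_eq_mul]
  ring

end Matrix

theorem generalized_variance_identifiability_general (Sb : Matrix (Fin 2) (Fin 2) ℝ)
    (hSb : Sb.PosSemidef) (c : ℝ) (hc : 0 < c)
    (h₁ : ((1 + Sb : Matrix (Fin 2) (Fin 2) ℝ) - 1).det = 1)
    (h₂ : (c ^ 2 • (1 + Sb : Matrix (Fin 2) (Fin 2) ℝ) - 1).det = 1) :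
    c = 1 := by
  rw [add_sub_cancel_left] at h₁
  rw [Matrix.det_smul_one_add_sub_one_fin_two, h₁] at h₂
  have hfactor : c ^ 2 * (c ^ 2 - 1) * (2 + Sb.trace) = 0 := by linear_combination h₂
  have htrace : 0 < 2 + Sb.trace := by linarith [hSb.trace_nonneg]
  have hc2 : c ^ 2 = 1 := by
    have : c ^ 2 * (c ^ 2 - 1) = 0 := (mul_eq_zero.mp hfactor).resolve_right htrace.ne'
    exact sub_eq_zero.mp ((mul_eq_zero.mp this).resolve_left (by positivity))
  exact (pow_eq_one_iff_of_nonneg hc.le two_ne_zero).mp hc2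

/-- Identifiability under the generalized-variance constraint: if `G = I₂ + S_b` with
`S_b` positive semidefinite and nonzero, `|G − I₂| = 1`, and the rescaled matrix `c²G`
(`c > 0`) also satisfies `|c²G − I₂| = 1`, then `c = 1`; hence no two distinct pairs
`(B, G)` and `(cB, c²G)` with `c ≠ 1` can both satisfy the constraint. -/
theorem generalized_variance_identifiability (Sb : Matrix (Fin 2) (Fin 2) ℝ)
    (hSb : Sb.PosSemidef) (hSb0 : Sb ≠ 0) (c : ℝ) (hc : 0 < c)
    (h₁ : ((1 + Sb : Matrix (Fin 2) (Fin 2) ℝ) - 1).det = 1)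
    (h₂ : (c ^ 2 • (1 + Sb : Matrix (Fin 2) (Fin 2) ℝ) - 1).det = 1) :
    c = 1 :=
  generalized_variance_identifiability_general Sb hSb c hc h₁ h₂
end
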